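/- arXiv:2510.15586 — 2 statements merged into one kernel-verified Lean document; each statement's English description precedes it below -/
import Mathlib

section
/- Let c and c' be admissible edge weightings of Q_n. The induced representations ρ_c and ρ_{c'} are unitarily equivalent — i.e. there exists a unitary (linear isometric isomorphism) W : ℂ^{U_n(c)} → ℂ^{U_n(c')} with W ∘ ρ_c(p_x) ∘ W⁻¹ = ρ_{c'}(p_x) for every vertex x of Q_n — if and only if Q_n(c') = Q_n(c) (the sets of edges of nonzero weight coincide) and there exist complex numbers λ_x of modulus 1, indexed by the vertices x of Q_n(c), such that c'(ij) = λ_i · λ_j · c(ij) for every edge {i,j} of Q_n(c). -/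
open scoped Classical

noncomputable section

/-- Adjacency in the hypercube `Q_n`: differ in exactly one coordinate. -/
def hcAdj {n : ℕ} (x y : Fin n → Bool) : Prop :=
  (Finset.univ.filter (fun k => x k ≠ y k)).card = 1

/-- Flip the `k`-th coordinate. -/
def hcFlip {n : ℕ} (x : Fin n → Bool) (k : Fin n) : Fin n → Bool :=
  Function.update x k (!x k)

/-- A vertex of `Q_n` is even if it has an even number of coordinates equal to `true`. -/
def hcEven {n : ℕ} (x : Fin n → Bool) : Prop :=
  (Finset.univ.filter (fun k => x k = true)).card % 2 = 0

/-- `i` belongs to `U_n(c)`: `i` is even and incident to an edge of nonzero weight. -/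
def inU {n : ℕ} (c : (Fin n → Bool) → (Fin n → Bool) → ℂ) (i : Fin n → Bool) : Prop :=
  hcEven i ∧ ∃ j, hcAdj i j ∧ c i j ≠ 0

/-- `j` belongs to `V_n(c)`: `j` is odd and incident to an edge of nonzero weight. -/
def inV {n : ℕ} (c : (Fin n → Bool) → (Fin n → Bool) → ℂ) (j : Fin n → Bool) : Prop :=
  ¬ hcEven j ∧ ∃ i, hcAdj i j ∧ c i j ≠ 0

/-- An edge weighting `c` of `Q_n` (with `c i j` the weight of the edge `{i,j}`,
`i` even, `j` odd) is admissible. -/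
def Admissible {n : ℕ} (c : (Fin n → Bool) → (Fin n → Bool) → ℂ) : Prop :=
  (∀ j₁, inV c j₁ → ∀ j₂, inV c j₂ →
    ∑ i ∈ Finset.univ.filter (fun i => hcEven i ∧ hcAdj i j₁ ∧ hcAdj i j₂),
      c i j₁ * (starRingEnd ℂ) (c i j₂) = if j₁ = j₂ then 1 else 0) ∧
  (∀ i₁, inU c i₁ → ∀ i₂, inU c i₂ →
    ∑ j ∈ Finset.univ.filter (fun j => ¬ hcEven j ∧ hcAdj i₁ j ∧ hcAdj i₂ j),
      c i₁ j * (starRingEnd ℂ) (c i₂ j) = if i₁ = i₂ then 1 else 0)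

/-- The finite set `U_n(c)` of supported even vertices. -/
def UFin {n : ℕ} (c : (Fin n → Bool) → (Fin n → Bool) → ℂ) : Finset (Fin n → Bool) :=
  Finset.univ.filter (inU c)

/-- The finite set `V_n(c)` of supported odd vertices. -/
def VFin {n : ℕ} (c : (Fin n → Bool) → (Fin n → Bool) → ℂ) : Finset (Fin n → Bool) :=
  Finset.univ.filter (inV c)

/-- For an odd vertex `j`, the vector `ψ_j ∈ ℂ^{U_n(c)}` whose `i`-th entry is `c i j`
if `{i,j}` is an edge of `Q_n` and `0` otherwise. -/
def psi {n : ℕ} (c : (Fin n → Bool) → (Fin n → Bool) → ℂ) (j : Fin n → Bool) :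
    EuclideanSpace ℂ {i : Fin n → Bool // i ∈ UFin c} :=
  WithLp.toLp 2 (fun i => if hcAdj i.1 j then c i.1 j else 0)

/-- The representation `ρ_c`: an even vertex `i ∈ U_n(c)` is sent to the matrix unit
`E_{ii}`, an odd vertex `j ∈ V_n(c)` to the orthogonal projection onto the span of the
unit vector `ψ_j` (the rank-one matrix `ψ_j ψ_j^*`), and every other vertex to `0`. -/
def rhoRep {n : ℕ} (c : (Fin n → Bool) → (Fin n → Bool) → ℂ) (x : Fin n → Bool) :
    Matrix {i : Fin n → Bool // i ∈ UFin c} {i : Fin n → Bool // i ∈ UFin c} ℂ :=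
  if hcEven x then (fun i i' => if i.1 = x ∧ i'.1 = x then 1 else 0)
  else (fun i i' => psi c x i * (starRingEnd ℂ) (psi c x i'))

section Helpers

variable {n : ℕ}

lemma hcAdj_symm {i j : Fin n → Bool} (h : hcAdj i j) : hcAdj j i := by
  unfold hcAdj at *
  convert h using 2
  ext k
  simp [ne_comm]

lemma hcEven_iff_not_of_adj {i j : Fin n → Bool} (h : hcAdj i j) :
    hcEven i ↔ ¬ hcEven j := by
  obtain ⟨a, ha⟩ := Finset.card_eq_one.mp h
  have hne : i a ≠ j a := by
    have : a ∈ Finset.univ.filter (fun k => i k ≠ j k) := ha ▸ Finset.mem_singleton_self a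
    simpa using this
  have heq : ∀ l, l ≠ a → i l = j l := by
    intro l hl
    by_contra hc
    have : l ∈ ({a} : Finset (Fin n)) := ha ▸ (by simp [hc])
    exact hl (by simpa using this)
  set A := Finset.univ.filter (fun k => i k = true) with hA
  set B := Finset.univ.filter (fun k => j k = true) with hB
  have hAB : A.erase a = B.erase a := by
    ext l
    rcases eq_or_ne l a with rfl | hl
    · simp
    · simp [hA, hB, Finset.mem_erase, hl, heq l hl]
  unfold hcEven
  rw [← hA, ← hB]
  cases hia : i a
  · have hja : j a = true := by
      cases hja : j a
      · exact absurd (hia.trans hja.symm) hne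
      · rfl
    have haA : a ∉ A := by simp [hA, hia]
    have haB : a ∈ B := by simp [hB, hja]
    have h1 : A.erase a = A := Finset.erase_eq_of_notMem haA
    have h2 : (B.erase a).card + 1 = B.card := Finset.card_erase_add_one haB
    have h3 := congrArg Finset.card hAB
    rw [h1] at h3
    omega
  · have hja : j a = false := by
      cases hja : j a
      · rfl
      · exact absurd (hia.trans hja.symm) hne
    have haA : a ∈ A := by simp [hA, hia]
    have haB : a ∉ B := by simp [hB, hja]
    have h1 : B.erase a = B := Finset.erase_eq_of_notMem haB
    have h2 : (A.erase a).card + 1 = A.card := Finset.card_erase_add_one haA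
    have h3 := congrArg Finset.card hAB
    rw [h1] at h3
    omega

lemma toEuclideanLin_apply'' {m : Type*} [Fintype m] [DecidableEq m]
    (M : Matrix m m ℂ) (v : EuclideanSpace ℂ m) (k : m) :
    (Matrix.toEuclideanLin M v) k = ∑ l, M k l * v l := rfl

/-- Application formula for `rhoRep` at an even vertex. -/
lemma rhoRep_even_apply (c : (Fin n → Bool) → (Fin n → Bool) → ℂ)
    {x : Fin n → Bool} (hx : hcEven x)
    (v : EuclideanSpace ℂ {i : Fin n → Bool // i ∈ UFin c}) (k : {i : Fin n → Bool // i ∈ UFin c}) :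
    (Matrix.toEuclideanLin (rhoRep c x) v) k = if k.1 = x then v k else 0 := by
  rw [toEuclideanLin_apply'']
  unfold rhoRep
  erw [if_pos hx]
  rcases eq_or_ne k.1 x with hk | hk
  · rw [if_pos hk]
    rw [Finset.sum_eq_single k]
    · simp [hk]
    · intro l _ hl
      have : ¬ (l.1 = x) := fun hc => hl (Subtype.ext (hc.trans hk.symm))
      simp [this]
    · simp
  · rw [if_neg hk]
    apply Finset.sum_eq_zero
    intro l _
    simp [hk]

/-- Application formula for `rhoRep` at an odd vertex. -/
lemma rhoRep_odd_apply (c : (Fin n → Bool) → (Fin n → Bool) → ℂ)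
    {x : Fin n → Bool} (hx : ¬ hcEven x)
    (v : EuclideanSpace ℂ {i : Fin n → Bool // i ∈ UFin c}) (k : {i : Fin n → Bool // i ∈ UFin c}) :
    (Matrix.toEuclideanLin (rhoRep c x) v) k
      = psi c x k * ∑ l, (starRingEnd ℂ) (psi c x l) * v l := by
  rw [toEuclideanLin_apply'']
  unfold rhoRep
  erw [if_neg hx, Finset.mul_sum]
  apply Finset.sum_congr rfl
  intro l _
  ring

end Helpers

section Helpers2

variable {n : ℕ} {c : (Fin n → Bool) → (Fin n → Bool) → ℂ}

lemma even_of_adj_odd {i j : Fin n → Bool} (h : hcAdj i j) (hj : ¬ hcEven j) : hcEven i :=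
  (hcEven_iff_not_of_adj h).mpr hj

lemma mem_UFin {i j : Fin n → Bool} (hadj : hcAdj i j) (hj : ¬ hcEven j) (hne : c i j ≠ 0) :
    i ∈ UFin c := by
  simp only [UFin, Finset.mem_filter, Finset.mem_univ, true_and]
  exact ⟨even_of_adj_odd hadj hj, j, hadj, hne⟩

lemma psi_sum (hadm : Admissible c) {j₁ j₂ : Fin n → Bool} (h1 : inV c j₁) (h2 : inV c j₂) :
    ∑ l : {i : Fin n → Bool // i ∈ UFin c}, psi c j₁ l * (starRingEnd ℂ) (psi c j₂ l)
      = if j₁ = j₂ then 1 else 0 := by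
  rw [← hadm.1 j₁ h1 j₂ h2]
  simp only [psi, WithLp.ofLp_toLp]
  rw [Finset.sum_coe_sort (UFin c)
    (fun i => (if hcAdj i j₁ then c i j₁ else 0) * (starRingEnd ℂ) (if hcAdj i j₂ then c i j₂ else 0))]
  set S := Finset.univ.filter
    (fun i => hcAdj i j₁ ∧ hcAdj i j₂ ∧ c i j₁ ≠ 0 ∧ c i j₂ ≠ 0) with hS
  have e1 : ∑ i ∈ UFin c,
      (if hcAdj i j₁ then c i j₁ else 0) * (starRingEnd ℂ) (if hcAdj i j₂ then c i j₂ else 0)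
      = ∑ i ∈ S,
      (if hcAdj i j₁ then c i j₁ else 0) * (starRingEnd ℂ) (if hcAdj i j₂ then c i j₂ else 0) := by
    apply (Finset.sum_subset _ _).symm
    · intro i hi
      simp only [hS, Finset.mem_filter, Finset.mem_univ, true_and] at hi
      exact mem_UFin hi.1 h1.1 hi.2.2.1
    · intro i _ hi
      simp only [hS, Finset.mem_filter, Finset.mem_univ, true_and] at hi
      by_cases ha1 : hcAdj i j₁
      · by_cases ha2 : hcAdj i j₂
        · by_cases hc1 : c i j₁ = 0
          · simp [ha1, hc1]
          · by_cases hc2 : c i j₂ = 0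
            · simp [ha2, hc2]
            · exact absurd ⟨ha1, ha2, hc1, hc2⟩ hi
        · simp [ha2]
      · simp [ha1]
  have e2 : ∑ i ∈ Finset.univ.filter (fun i => hcEven i ∧ hcAdj i j₁ ∧ hcAdj i j₂),
        c i j₁ * (starRingEnd ℂ) (c i j₂)
      = ∑ i ∈ S, c i j₁ * (starRingEnd ℂ) (c i j₂) := by
    apply (Finset.sum_subset _ _).symm
    · intro i hi
      simp only [hS, Finset.mem_filter, Finset.mem_univ, true_and] at hi ⊢
      exact ⟨even_of_adj_odd hi.1 h1.1, hi.1, hi.2.1⟩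
    · intro i hmem hi
      simp only [hS, Finset.mem_filter, Finset.mem_univ, true_and] at hi
      simp only [Finset.mem_filter, Finset.mem_univ, true_and] at hmem
      by_cases hc1 : c i j₁ = 0
      · simp [hc1]
      · by_cases hc2 : c i j₂ = 0
        · simp [hc2]
        · exact absurd ⟨hmem.2.1, hmem.2.2, hc1, hc2⟩ hi
  rw [e1, e2]
  apply Finset.sum_congr rfl
  intro i hi
  simp only [hS, Finset.mem_filter, Finset.mem_univ, true_and] at hi
  rw [if_pos hi.1, if_pos hi.2.1]

lemma psi_norm (hadm : Admissible c) {j : Fin n → Bool} (hj : inV c j) : ‖psi c j‖ = 1 := by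
  have h := psi_sum hadm hj hj
  rw [if_pos rfl] at h
  have h2 : ∀ l : {i : Fin n → Bool // i ∈ UFin c},
      psi c j l * (starRingEnd ℂ) (psi c j l) = ((‖psi c j l‖ : ℂ)) ^ 2 := by
    intro l
    rw [Complex.mul_conj, Complex.normSq_eq_norm_sq]
    push_cast
    ring
  have h3 : ∑ l : {i : Fin n → Bool // i ∈ UFin c}, (‖psi c j l‖ ^ 2 : ℝ) = 1 := by
    have h4 : ((∑ l : {i : Fin n → Bool // i ∈ UFin c}, (‖psi c j l‖ ^ 2 : ℝ) : ℝ) : ℂ) = 1 := by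
      push_cast
      rw [← h]
      exact Finset.sum_congr rfl fun l _ => (h2 l).symm
    exact_mod_cast h4
  rw [EuclideanSpace.norm_eq, h3, Real.sqrt_one]

lemma euclidean_eq_sum_single {m : Type*} [Fintype m] [DecidableEq m]
    (v : EuclideanSpace ℂ m) : v = ∑ k, v k • EuclideanSpace.single k (1 : ℂ) := by
  ext l
  rw [WithLp.ofLp_sum, Finset.sum_apply]
  simp [EuclideanSpace.single_apply]

end Helpers2

section Key

variable {n : ℕ}

lemma mem_UFin_iff' {c : (Fin n → Bool) → (Fin n → Bool) → ℂ} {i : Fin n → Bool} :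
    i ∈ UFin c ↔ hcEven i ∧ ∃ j, hcAdj i j ∧ c i j ≠ 0 := by
  simp [UFin, inU]

lemma key_lemma (c c' : (Fin n → Bool) → (Fin n → Bool) → ℂ)
    (hadm : Admissible c) (hadm' : Admissible c')
    (W : EuclideanSpace ℂ {i : Fin n → Bool // i ∈ UFin c} ≃ₗᵢ[ℂ]
        EuclideanSpace ℂ {i : Fin n → Bool // i ∈ UFin c'})
    (hW : ∀ x v, W (Matrix.toEuclideanLin (rhoRep c x) v)
          = Matrix.toEuclideanLin (rhoRep c' x) (W v)) :
    ∃ lam : (Fin n → Bool) → ℂ, (∀ x, ‖lam x‖ = 1) ∧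
      ∀ i j, hcEven i → hcAdj i j → c i j ≠ 0 → c' i j = lam i * lam j * c i j := by
  have step1 : ∀ k : {i : Fin n → Bool // i ∈ UFin c}, ∃ μ : ℂ, ‖μ‖ = 1 ∧
      ∃ hk' : k.1 ∈ UFin c', W (EuclideanSpace.single k 1)
        = μ • EuclideanSpace.single (⟨k.1, hk'⟩ : {i : Fin n → Bool // i ∈ UFin c'}) 1 := by
    intro k
    have hkeven : hcEven k.1 := (mem_UFin_iff'.mp k.2).1
    set u := W (EuclideanSpace.single k (1:ℂ)) with hu
    have hfix : Matrix.toEuclideanLin (rhoRep c k.1) (EuclideanSpace.single k 1)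
        = EuclideanSpace.single k 1 := by
      ext l
      rw [rhoRep_even_apply c hkeven]
      rcases eq_or_ne l.1 k.1 with hl | hl
      · rw [if_pos hl]
      · rw [if_neg hl, EuclideanSpace.single_apply,
          if_neg (fun hc => hl (congrArg Subtype.val hc))]
    have heq : u = Matrix.toEuclideanLin (rhoRep c' k.1) u := by
      conv_lhs => rw [hu, ← hfix]
      rw [hW k.1]
    have hvanish : ∀ l : {i : Fin n → Bool // i ∈ UFin c'}, l.1 ≠ k.1 → u l = 0 := by
      intro l hl
      have h2 : u l = (Matrix.toEuclideanLin (rhoRep c' k.1) u) l := by rw [← heq]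
      rw [rhoRep_even_apply c' hkeven u l, if_neg hl] at h2
      exact h2
    have hnormu : ‖u‖ = 1 := by
      rw [hu, W.norm_map, EuclideanSpace.norm_single, norm_one]
    have hmem' : k.1 ∈ UFin c' := by
      by_contra hmem
      have hzero : u = 0 := by
        ext l
        exact hvanish l (fun hc => hmem (hc ▸ l.2))
      rw [hzero, norm_zero] at hnormu
      norm_num at hnormu
    have hrepr : u = u ⟨k.1, hmem'⟩ •
        EuclideanSpace.single (⟨k.1, hmem'⟩ : {i : Fin n → Bool // i ∈ UFin c'}) 1 := by
      ext l
      rcases eq_or_ne l (⟨k.1, hmem'⟩ : {i : Fin n → Bool // i ∈ UFin c'}) with rfl | hl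
      · simp [EuclideanSpace.single_apply]
      · rw [hvanish l (fun hc => hl (Subtype.ext hc))]
        simp [EuclideanSpace.single_apply, hl]
    have habs : ‖u ⟨k.1, hmem'⟩‖ = 1 := by
      rw [hrepr, norm_smul, EuclideanSpace.norm_single, norm_one, mul_one] at hnormu
      exact hnormu
    exact ⟨u ⟨k.1, hmem'⟩, habs, hmem', hrepr⟩
  choose μ hμabs hmem' hμ using step1
  have step2 : ∀ j : Fin n → Bool, ∃ α : ℂ, ‖α‖ = 1 ∧
      (inV c j → ∀ i, hcAdj i j → ∀ hi : i ∈ UFin c,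
        c' i j = α * (μ ⟨i, hi⟩ * c i j)) := by
    intro j
    by_cases hj : inV c j
    · set u := W (psi c j) with hu
      have hfix : Matrix.toEuclideanLin (rhoRep c j) (psi c j) = psi c j := by
        ext l
        rw [rhoRep_odd_apply c hj.1]
        have hs : ∑ l' : {i : Fin n → Bool // i ∈ UFin c},
            (starRingEnd ℂ) (psi c j l') * psi c j l' = 1 := by
          have := psi_sum hadm hj hj
          rw [if_pos rfl] at this
          rw [← this]
          exact Finset.sum_congr rfl fun l' _ => mul_comm _ _
        rw [hs, mul_one]
      have heq : u = Matrix.toEuclideanLin (rhoRep c' j) u := by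
        conv_lhs => rw [hu, ← hfix]
        rw [hW j]
      have hrep : ∀ l : {i : Fin n → Bool // i ∈ UFin c'}, u l = psi c' j l *
          ∑ l' : {i : Fin n → Bool // i ∈ UFin c'}, (starRingEnd ℂ) (psi c' j l') * u l' := by
        intro l
        have h2 : u l = (Matrix.toEuclideanLin (rhoRep c' j) u) l := by rw [← heq]
        rw [rhoRep_odd_apply c' hj.1 u l] at h2
        exact h2
      set S := ∑ l' : {i : Fin n → Bool // i ∈ UFin c'},
        (starRingEnd ℂ) (psi c' j l') * u l' with hS
      have hnormu : ‖u‖ = 1 := by rw [hu, W.norm_map]; exact psi_norm hadm hj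
      have hj' : inV c' j := by
        by_contra hj'
        have hpz : psi c' j = 0 := by
          ext l
          simp only [psi, WithLp.ofLp_toLp]
          by_cases hadj : hcAdj l.1 j
          · rw [if_pos hadj]
            by_contra hne
            exact hj' ⟨hj.1, l.1, hadj, hne⟩
          · rw [if_neg hadj]
            rfl
        have : u = 0 := by
          ext l
          rw [hrep l, hpz]
          simp
        rw [this, norm_zero] at hnormu
        norm_num at hnormu
      have hpsinorm' : ‖psi c' j‖ = 1 := psi_norm hadm' hj'
      have husmul : u = S • psi c' j := by
        ext l
        rw [hrep l]
        simp only [PiLp.smul_apply, smul_eq_mul]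
        ring
      have hSabs : ‖S‖ = 1 := by
        rw [husmul, norm_smul, hpsinorm', mul_one] at hnormu
        exact hnormu
      refine ⟨(starRingEnd ℂ) S, by rw [Complex.norm_conj]; exact hSabs, ?_⟩
      intro _ i hadj hi
      have hival : u ⟨i, hmem' ⟨i, hi⟩⟩ = μ ⟨i, hi⟩ * c i j := by
        rw [hu]
        conv_lhs => rw [euclidean_eq_sum_single (psi c j)]
        rw [map_sum]
        simp_rw [map_smul, hμ]
        rw [WithLp.ofLp_sum, Finset.sum_apply]
        rw [Finset.sum_eq_single (⟨i, hi⟩ : {x : Fin n → Bool // x ∈ UFin c})]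
        · simp only [PiLp.smul_apply, smul_eq_mul, EuclideanSpace.single_apply, psi, WithLp.ofLp_toLp]
          rw [if_pos hadj]
          simp [mul_comm]
        · intro b _ hb
          simp only [PiLp.smul_apply, smul_eq_mul, EuclideanSpace.single_apply]
          rw [if_neg (fun hc => hb (Subtype.ext (by
            have := congrArg Subtype.val hc
            exact this.symm)))]
          ring
        · intro h
          exact absurd (Finset.mem_univ _) h
      have h2 : u ⟨i, hmem' ⟨i, hi⟩⟩ = S * c' i j := by
        rw [hrep]
        simp only [psi, WithLp.ofLp_toLp]
        rw [if_pos hadj]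
        ring
      have hkeyeq : S * c' i j = μ ⟨i, hi⟩ * c i j := by rw [← h2, hival]
      have hconjS : (starRingEnd ℂ) S * S = 1 := by
        rw [mul_comm, Complex.mul_conj, Complex.normSq_eq_norm_sq, hSabs]
        norm_num
      calc c' i j = ((starRingEnd ℂ) S * S) * c' i j := by rw [hconjS, one_mul]
        _ = (starRingEnd ℂ) S * (S * c' i j) := by ring
        _ = (starRingEnd ℂ) S * (μ ⟨i, hi⟩ * c i j) := by rw [hkeyeq]
    · exact ⟨1, by simp, fun h => absurd h hj⟩
  choose alpha halphaabs halpha using step2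
  refine ⟨fun x => if h : x ∈ UFin c then μ ⟨x, h⟩ else alpha x, ?_, ?_⟩
  · intro x
    by_cases h : x ∈ UFin c
    · simp only [dif_pos h]; exact hμabs _
    · simp only [dif_neg h]; exact halphaabs _
  · intro i j heven hadj hne
    have hjodd : ¬ hcEven j := (hcEven_iff_not_of_adj hadj).mp heven
    have hi : i ∈ UFin c := mem_UFin_iff'.mpr ⟨heven, j, hadj, hne⟩
    have hjV : inV c j := ⟨hjodd, i, hadj, hne⟩
    have hjnotU : j ∉ UFin c := fun h => hjodd (mem_UFin_iff'.mp h).1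
    show c' i j = (if h : i ∈ UFin c then μ ⟨i, h⟩ else alpha i) *
        (if h : j ∈ UFin c then μ ⟨j, h⟩ else alpha j) * c i j
    rw [dif_pos hi, dif_neg hjnotU, halpha j hjV i hadj hi]
    ring

end Key

section Back

variable {n : ℕ}

lemma lam_ne_zero {lam : (Fin n → Bool) → ℂ} (habs : ∀ x, ‖lam x‖ = 1)
    (x : Fin n → Bool) : lam x ≠ 0 := by
  intro h
  have := habs x
  rw [h] at this
  simp at this

lemma backward_lemma (c c' : (Fin n → Bool) → (Fin n → Bool) → ℂ)
    (hS : ∀ i j, hcEven i → hcAdj i j → (c i j ≠ 0 ↔ c' i j ≠ 0))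
    (lam : (Fin n → Bool) → ℂ) (habs : ∀ x, ‖lam x‖ = 1)
    (hlam : ∀ i j, hcEven i → hcAdj i j → c i j ≠ 0 → c' i j = lam i * lam j * c i j) :
    ∃ W : EuclideanSpace ℂ {i : Fin n → Bool // i ∈ UFin c} ≃ₗᵢ[ℂ]
        EuclideanSpace ℂ {i : Fin n → Bool // i ∈ UFin c'},
      ∀ x v, W (Matrix.toEuclideanLin (rhoRep c x) v)
          = Matrix.toEuclideanLin (rhoRep c' x) (W v) := by
  have hUU : ∀ x, x ∈ UFin c ↔ x ∈ UFin c' := by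
    intro x
    rw [mem_UFin_iff', mem_UFin_iff']
    constructor
    · rintro ⟨he, j, hadj, hne⟩; exact ⟨he, j, hadj, (hS x j he hadj).mp hne⟩
    · rintro ⟨he, j, hadj, hne⟩; exact ⟨he, j, hadj, (hS x j he hadj).mpr hne⟩
  have hconj : ∀ x, (starRingEnd ℂ) (lam x) * lam x = 1 := by
    intro x
    rw [mul_comm, Complex.mul_conj, Complex.normSq_eq_norm_sq, habs]
    norm_num
  set e : {i : Fin n → Bool // i ∈ UFin c} ≃ {i : Fin n → Bool // i ∈ UFin c'} :=
    Equiv.subtypeEquivRight hUU with he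
  let Wlin : EuclideanSpace ℂ {i : Fin n → Bool // i ∈ UFin c} ≃ₗ[ℂ]
      EuclideanSpace ℂ {i : Fin n → Bool // i ∈ UFin c'} :=
    { toFun := fun v => WithLp.toLp 2 (fun k => lam k.1 * v ⟨k.1, (hUU k.1).mpr k.2⟩)
      invFun := fun v => WithLp.toLp 2 (fun k => (starRingEnd ℂ) (lam k.1) * v ⟨k.1, (hUU k.1).mp k.2⟩)
      map_add' := fun v w => PiLp.ext fun k => by
        show lam k.1 * ((v + w) _) = lam k.1 * v _ + lam k.1 * w _
        rw [PiLp.add_apply]; ring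
      map_smul' := fun a v => PiLp.ext fun k => by
        show lam k.1 * ((a • v) _) = a * (lam k.1 * v _)
        rw [PiLp.smul_apply, smul_eq_mul]; ring
      left_inv := fun v => PiLp.ext fun k => by
        show (starRingEnd ℂ) (lam k.1) * (lam k.1 * v k) = v k
        rw [← mul_assoc, hconj, one_mul]
      right_inv := fun v => PiLp.ext fun k => by
        show lam k.1 * ((starRingEnd ℂ) (lam k.1) * v k) = v k
        rw [← mul_assoc, mul_comm (lam k.1), hconj, one_mul] }
  have hnorm : ∀ v, ‖Wlin v‖ = ‖v‖ := by
    intro v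
    rw [EuclideanSpace.norm_eq, EuclideanSpace.norm_eq]
    congr 1
    refine (Fintype.sum_equiv e _ _ ?_).symm
    intro l
    show ‖v l‖ ^ 2 = ‖lam (e l).1 * v ⟨(e l).1, _⟩‖ ^ 2
    have : ‖lam (e l).1 * v ⟨(e l).1, (hUU (e l).1).mpr (e l).2⟩‖
        = ‖lam l.1 * v l‖ := rfl
    rw [this, norm_mul, habs, one_mul]
  refine ⟨⟨Wlin, hnorm⟩, ?_⟩
  have hWapp : ∀ (u : EuclideanSpace ℂ {i : Fin n → Bool // i ∈ UFin c})
      (k : {i : Fin n → Bool // i ∈ UFin c'}),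
      (⟨Wlin, hnorm⟩ : EuclideanSpace ℂ {i : Fin n → Bool // i ∈ UFin c} ≃ₗᵢ[ℂ]
        EuclideanSpace ℂ {i : Fin n → Bool // i ∈ UFin c'}) u k
        = lam k.1 * u ⟨k.1, (hUU k.1).mpr k.2⟩ := fun u k => rfl
  intro x v
  by_cases hx : hcEven x
  · ext k
    rw [hWapp, rhoRep_even_apply c hx, rhoRep_even_apply c' hx, hWapp]
    by_cases hk : k.1 = x
    · rw [if_pos hk, if_pos hk]
    · rw [if_neg hk, if_neg hk, mul_zero]
  · have hpsi' : ∀ k : {i : Fin n → Bool // i ∈ UFin c'},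
        psi c' x k = lam x * (lam k.1 * psi c x ⟨k.1, (hUU k.1).mpr k.2⟩) := by
      intro k
      have heven : hcEven k.1 := (mem_UFin_iff'.mp ((hUU k.1).mpr k.2)).1
      show (if hcAdj k.1 x then c' k.1 x else 0)
          = lam x * (lam k.1 * if hcAdj k.1 x then c k.1 x else 0)
      by_cases hadj : hcAdj k.1 x
      · rw [if_pos hadj, if_pos hadj]
        by_cases hne : c k.1 x = 0
        · have h0 : c' k.1 x = 0 := by
            by_contra hcc
            exact ((hS k.1 x heven hadj).mpr hcc) hne
          rw [h0, hne]; ring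
        · rw [hlam k.1 x heven hadj hne]; ring
      · rw [if_neg hadj, if_neg hadj]; ring
    ext k
    rw [hWapp, rhoRep_odd_apply c hx, rhoRep_odd_apply c' hx, hpsi' k]
    have hsum : ∑ l : {i : Fin n → Bool // i ∈ UFin c'},
        (starRingEnd ℂ) (psi c' x l) *
          ((⟨Wlin, hnorm⟩ : EuclideanSpace ℂ {i : Fin n → Bool // i ∈ UFin c} ≃ₗᵢ[ℂ]
            EuclideanSpace ℂ {i : Fin n → Bool // i ∈ UFin c'}) v) l
        = (starRingEnd ℂ) (lam x) *
          ∑ l : {i : Fin n → Bool // i ∈ UFin c}, (starRingEnd ℂ) (psi c x l) * v l := by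
      rw [Finset.mul_sum]
      refine (Fintype.sum_equiv e _ _ ?_).symm
      intro l
      rw [hpsi' (e l), hWapp v (e l)]
      show (starRingEnd ℂ) (lam x) * ((starRingEnd ℂ) (psi c x l) * v l)
          = (starRingEnd ℂ) (lam x * (lam l.1 * psi c x l)) * (lam l.1 * v l)
      rw [map_mul, map_mul]
      linear_combination (-((starRingEnd ℂ) (lam x) * (starRingEnd ℂ) (psi c x l) * v l))
        * hconj l.1
    rw [hsum]
    have hval : psi c x ⟨k.1, (hUU k.1).mpr k.2⟩ = psi c x ⟨k.1, (hUU k.1).mpr k.2⟩ := rfl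
    set P := psi c x ⟨k.1, (hUU k.1).mpr k.2⟩
    set S := ∑ l : {i : Fin n → Bool // i ∈ UFin c}, (starRingEnd ℂ) (psi c x l) * v l
    have hc2 : lam x * (starRingEnd ℂ) (lam x) = 1 := by
      rw [mul_comm]; exact hconj x
    linear_combination (-(lam k.1 * P * S)) * hc2

end Back


/-- Two admissible edge weightings `c, c'` of `Q_n` induce unitarily
equivalent representations `ρ_c`, `ρ_{c'}` if and only if their support graphs coincide
and `c'` is obtained from `c` by multiplying with modulus-one scalars attached to the
vertices: `c'(ij) = λ_i λ_j c(ij)` on every edge of nonzero weight. -/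
theorem rhoRep_unitary_equivalence_iff {n : ℕ} (hn : 1 ≤ n)
    (c c' : (Fin n → Bool) → (Fin n → Bool) → ℂ)
    (hadm : Admissible c) (hadm' : Admissible c') :
    (∃ W : EuclideanSpace ℂ {i : Fin n → Bool // i ∈ UFin c} ≃ₗᵢ[ℂ]
        EuclideanSpace ℂ {i : Fin n → Bool // i ∈ UFin c'},
      ∀ x v, W (Matrix.toEuclideanLin (rhoRep c x) v)
          = Matrix.toEuclideanLin (rhoRep c' x) (W v)) ↔
    ((∀ i j, hcEven i → hcAdj i j → (c i j ≠ 0 ↔ c' i j ≠ 0)) ∧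
      ∃ lam : (Fin n → Bool) → ℂ, (∀ x, ‖lam x‖ = 1) ∧
        ∀ i j, hcEven i → hcAdj i j → c i j ≠ 0 → c' i j = lam i * lam j * c i j) := by
  constructor
  · rintro ⟨W, hW⟩
    have hWsymm : ∀ x v, W.symm (Matrix.toEuclideanLin (rhoRep c' x) v)
        = Matrix.toEuclideanLin (rhoRep c x) (W.symm v) := by
      intro x v
      have h1 := hW x (W.symm v)
      rw [W.apply_symm_apply] at h1
      rw [← h1, W.symm_apply_apply]
    obtain ⟨lam, habs, hlam⟩ := key_lemma c c' hadm hadm' W hW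
    obtain ⟨lam2, habs2, hlam2⟩ := key_lemma c' c hadm' hadm W.symm hWsymm
    refine ⟨?_, lam, habs, hlam⟩
    intro i j he ha
    constructor
    · intro hne
      rw [hlam i j he ha hne]
      exact mul_ne_zero (mul_ne_zero (lam_ne_zero habs i) (lam_ne_zero habs j)) hne
    · intro hne'
      rw [hlam2 i j he ha hne']
      exact mul_ne_zero (mul_ne_zero (lam_ne_zero habs2 i) (lam_ne_zero habs2 j)) hne'
  · rintro ⟨hS, lam, habs, hlam⟩
    exact backward_lemma c c' hS lam habs hlam
end
end

section
/- Let c be an admissible edge weighting of Q_n with c(e) ≠ 0 for every edge e of Q_n. Then there exist a point t = (t_0,…,t_{n-1}) of the standard simplex Δ_{n-1} and complex numbers λ_x of modulus 1, indexed by all vertices x of Q_n, such that for every even vertex i and every k < n: c({i, i#k}) = λ_i · λ_{i#k} · (−1)^{par_k(i)} · √(t_k); that is, c(ij) = λ_i λ_j c_t(ij) for every edge {i,j} of Q_n. -/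
open scoped Classical

noncomputable section

/-- `hcPar k i` is the number of indices `ℓ ≤ k` with `i ℓ = true` (its parity is
`par_k(i)` from the paper). -/
def hcPar {n : ℕ} (k : Fin n) (i : Fin n → Bool) : ℕ :=
  (Finset.univ.filter (fun ℓ => ℓ ≤ k ∧ i ℓ = true)).card

/-- The edge weighting `c_t` associated to a point `t` of the standard simplex: the
edge `{i, i#k}` with `i` even gets the weight `(−1)^{par_k(i)} √(t_k)`. -/
def ctWeight {n : ℕ} (t : Fin n → ℝ) :
    (Fin n → Bool) → (Fin n → Bool) → ℂ :=
  fun i j => ∑ k ∈ Finset.univ.filter (fun k => j = hcFlip i k),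
    (-1 : ℂ) ^ hcPar k i * (Real.sqrt (t k) : ℂ)

namespace HCAux

variable {n : ℕ}

lemma flip_self (x : Fin n → Bool) (k : Fin n) : hcFlip x k k = !x k := by
  simp [hcFlip]

lemma flip_ne (x : Fin n → Bool) {k l : Fin n} (h : l ≠ k) : hcFlip x k l = x l := by
  simp [hcFlip, Function.update_of_ne h]

lemma flip_apply (x : Fin n → Bool) (k l : Fin n) :
    hcFlip x k l = if l = k then !x k else x l := by
  by_cases h : l = k
  · subst h; simp [flip_self]
  · simp [flip_ne x h, h]

lemma flip_flip (x : Fin n → Bool) (k : Fin n) : hcFlip (hcFlip x k) k = x := by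
  funext l
  by_cases h : l = k
  · subst h; simp [flip_self]
  · simp [flip_ne _ h]

lemma flip_comm (x : Fin n → Bool) (k l : Fin n) :
    hcFlip (hcFlip x k) l = hcFlip (hcFlip x l) k := by
  by_cases h : k = l
  · subst h; rfl
  funext m
  by_cases h1 : m = k <;> by_cases h2 : m = l <;>
    simp_all [flip_apply]

lemma adj_iff {x y : Fin n → Bool} : hcAdj x y ↔ ∃ k, y = hcFlip x k := by
  constructor
  · intro h
    obtain ⟨k, hk⟩ := Finset.card_eq_one.mp h
    refine ⟨k, funext fun l => ?_⟩
    by_cases hl : l = k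
    · subst hl
      have hmem : l ∈ Finset.univ.filter (fun m => x m ≠ y m) := by
        rw [hk]; exact Finset.mem_singleton_self l
      have : x l ≠ y l := (Finset.mem_filter.mp hmem).2
      rw [flip_self]
      cases hx : x l <;> cases hy : y l <;> simp_all
    · have hmem : l ∉ Finset.univ.filter (fun m => x m ≠ y m) := by
        rw [hk]; simp [hl]
      have : ¬ x l ≠ y l := by
        intro hc; exact hmem (Finset.mem_filter.mpr ⟨Finset.mem_univ l, hc⟩)
      rw [flip_ne _ hl]
      exact (not_not.mp this).symm
  · rintro ⟨k, rfl⟩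
    have : Finset.univ.filter (fun m => x m ≠ hcFlip x k m) = {k} := by
      ext m
      by_cases hm : m = k
      · subst hm; simp [flip_self]
      · simp [flip_ne _ hm, hm]
    rw [hcAdj, this, Finset.card_singleton]

lemma adj_flip (x : Fin n → Bool) (k : Fin n) : hcAdj x (hcFlip x k) :=
  adj_iff.mpr ⟨k, rfl⟩

lemma adj_symm {x y : Fin n → Bool} (h : hcAdj x y) : hcAdj y x := by
  rw [hcAdj] at h ⊢
  have : Finset.univ.filter (fun k => y k ≠ x k)
      = Finset.univ.filter (fun k => x k ≠ y k) := by
    ext m; simp [ne_comm]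
  rw [this]; exact h

def hcWeight (x : Fin n → Bool) : ℕ := (Finset.univ.filter (fun k => x k = true)).card

lemma filter_flip_true {x : Fin n → Bool} {k : Fin n} (h : x k = true) :
    Finset.univ.filter (fun l => hcFlip x k l = true)
      = (Finset.univ.filter (fun l => x l = true)).erase k := by
  ext m
  by_cases hm : m = k
  · subst hm; simp [flip_self, h]
  · simp [flip_ne _ hm, hm]

lemma filter_flip_false {x : Fin n → Bool} {k : Fin n} (h : x k = false) :
    Finset.univ.filter (fun l => hcFlip x k l = true)
      = insert k (Finset.univ.filter (fun l => x l = true)) := by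
  ext m
  by_cases hm : m = k
  · subst hm; simp [flip_self, h]
  · simp [flip_ne _ hm, hm]

lemma weight_flip_true {x : Fin n → Bool} {k : Fin n} (h : x k = true) :
    hcWeight (hcFlip x k) + 1 = hcWeight x := by
  rw [hcWeight, hcWeight, filter_flip_true h]
  exact Finset.card_erase_add_one (by simp [h])

lemma weight_flip_false {x : Fin n → Bool} {k : Fin n} (h : x k = false) :
    hcWeight (hcFlip x k) = hcWeight x + 1 := by
  rw [hcWeight, hcWeight, filter_flip_false h]
  exact Finset.card_insert_of_notMem (by simp [h])

lemma hcEven_iff {x : Fin n → Bool} : hcEven x ↔ hcWeight x % 2 = 0 := Iff.rfl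

lemma hcEven_flip {x : Fin n → Bool} (k : Fin n) : hcEven (hcFlip x k) ↔ ¬ hcEven x := by
  rw [hcEven_iff, hcEven_iff]
  cases h : x k
  · have := weight_flip_false h; omega
  · have := weight_flip_true h; omega

lemma weight_zero_iff {x : Fin n → Bool} : hcWeight x = 0 ↔ x = fun _ => false := by
  constructor
  · intro h
    funext k
    by_contra hk
    have : x k = true := by cases hxk : x k <;> simp_all
    have : k ∈ Finset.univ.filter (fun l => x l = true) := by simp [this]
    rw [hcWeight, Finset.card_eq_zero] at h
    simp [h] at this
  · rintro rfl
    simp [hcWeight]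

lemma hcEven_false : hcEven (fun _ : Fin n => false) := by
  simp [hcEven]


namespace HCAux2
open HCAux
variable {n : ℕ}

lemma par_flip (i : Fin n → Bool) (k m : Fin n) :
    hcPar k (hcFlip i m) % 2 = (hcPar k i + if m ≤ k then 1 else 0) % 2 := by
  by_cases hm : m ≤ k
  · cases h : i m
    · have : Finset.univ.filter (fun l => l ≤ k ∧ hcFlip i m l = true)
          = insert m (Finset.univ.filter (fun l => l ≤ k ∧ i l = true)) := by
        ext l
        by_cases hl : l = m
        · subst hl; simp [flip_self, h, hm]
        · simp [flip_ne _ hl, hl]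
      rw [hcPar, this, Finset.card_insert_of_notMem (by simp [h]), hcPar]
      simp [hm]
    · have : Finset.univ.filter (fun l => l ≤ k ∧ hcFlip i m l = true)
          = (Finset.univ.filter (fun l => l ≤ k ∧ i l = true)).erase m := by
        ext l
        by_cases hl : l = m
        · subst hl; simp [flip_self, h]
        · simp [flip_ne _ hl, hl]
      rw [hcPar, this, hcPar]
      have hmem : m ∈ Finset.univ.filter (fun l => l ≤ k ∧ i l = true) := by simp [hm, h]
      have := Finset.card_erase_add_one hmem
      simp [hm]
      omega
  · have : Finset.univ.filter (fun l => l ≤ k ∧ hcFlip i m l = true)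
        = Finset.univ.filter (fun l => l ≤ k ∧ i l = true) := by
      ext l
      by_cases hl : l = m
      · subst hl; simp [hm]
      · simp [flip_ne _ hl]
    rw [hcPar, this, hcPar]
    simp [hm]

lemma neg_one_pow_congr {a b : ℕ} (h : a % 2 = b % 2) : ((-1 : ℂ))^a = (-1)^b := by
  rcases Nat.even_or_odd a with ha | ha
  · have hb : Even b := by rw [Nat.even_iff] at *; omega
    rw [ha.neg_one_pow, hb.neg_one_pow]
  · have hb : Odd b := by rw [Nat.odd_iff] at *; omega
    rw [ha.neg_one_pow, hb.neg_one_pow]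

lemma par_square (i : Fin n → Bool) {k l : Fin n} (hkl : k ≠ l) :
    (hcPar k i + hcPar k (hcFlip (hcFlip i k) l)) % 2
      = (hcPar l i + hcPar l (hcFlip (hcFlip i k) l) + 1) % 2 := by
  have h1 := par_flip i k k
  have h2 := par_flip (hcFlip i k) k l
  have h3 := par_flip i l k
  have h4 := par_flip (hcFlip i k) l l
  have hkk : k ≤ k := le_refl k
  have hll : l ≤ l := le_refl l
  rcases lt_or_gt_of_ne hkl with h | h
  · have hlk : ¬ l ≤ k := not_le.mpr h
    have hkl' : k ≤ l := le_of_lt h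
    simp [hkk, hll, hlk, hkl'] at h1 h2 h3 h4
    omega
  · have hlk : l ≤ k := le_of_lt h
    have hkl' : ¬ k ≤ l := not_le.mpr h
    simp [hkk, hll, hlk, hkl'] at h1 h2 h3 h4
    omega

lemma sign_square (i : Fin n → Bool) {k l : Fin n} (hkl : k ≠ l) :
    ((-1 : ℂ))^(hcPar k i) * (-1)^(hcPar k (hcFlip (hcFlip i k) l))
      = -(((-1 : ℂ))^(hcPar l i) * (-1)^(hcPar l (hcFlip (hcFlip i k) l))) := by
  rw [← pow_add, ← pow_add]
  rw [neg_one_pow_congr (par_square i hkl)]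
  rw [pow_succ]
  ring


variable {n : ℕ}

lemma flip_left_inj (x : Fin n → Bool) : Function.Injective (hcFlip x) := by
  intro k k' h
  by_contra hk
  have h1 : hcFlip x k k = !x k := flip_self x k
  have h2 : hcFlip x k' k = x k := flip_ne x hk
  rw [h] at h1
  rw [h2] at h1
  cases hxk : x k <;> simp [hxk] at h1

lemma flip_ne_self (x : Fin n → Bool) (k : Fin n) : hcFlip x k ≠ x := by
  intro h
  have := congrFun h k
  rw [flip_self] at this
  cases hxk : x k <;> simp [hxk] at this

lemma flip_flip_ne_self {x : Fin n → Bool} {k l : Fin n} (hkl : k ≠ l) :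
    hcFlip (hcFlip x k) l ≠ x := by
  intro h
  have := congrFun h k
  rw [flip_ne _ hkl, flip_self] at this
  cases hxk : x k <;> simp [hxk] at this

lemma flip_ne_flip {x : Fin n → Bool} {k l : Fin n} (hkl : k ≠ l) :
    hcFlip x k ≠ hcFlip x l := fun h => hkl (flip_left_inj x h)

/-- Common odd neighbours of an even vertex with itself: all its neighbours. -/
lemma common_diag_U {i : Fin n → Bool} (hi : hcEven i) :
    Finset.univ.filter (fun j => ¬ hcEven j ∧ hcAdj i j ∧ hcAdj i j)
      = Finset.univ.image (hcFlip i) := by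
  ext x
  simp only [Finset.mem_filter, Finset.mem_univ, true_and, Finset.mem_image]
  constructor
  · rintro ⟨-, h, -⟩
    obtain ⟨k, rfl⟩ := adj_iff.mp h
    exact ⟨k, rfl⟩
  · rintro ⟨k, -, rfl⟩
    exact ⟨by rw [hcEven_flip]; exact fun h => h hi, adj_flip i k, adj_flip i k⟩

lemma common_diag_V {j : Fin n → Bool} (hj : ¬ hcEven j) :
    Finset.univ.filter (fun i => hcEven i ∧ hcAdj i j ∧ hcAdj i j)
      = Finset.univ.image (hcFlip j) := by
  ext x
  simp only [Finset.mem_filter, Finset.mem_univ, true_and, Finset.mem_image]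
  constructor
  · rintro ⟨-, h, -⟩
    obtain ⟨k, rfl⟩ := adj_iff.mp (adj_symm h)
    exact ⟨k, rfl⟩
  · rintro ⟨k, -, rfl⟩
    refine ⟨by rw [hcEven_flip]; exact hj, ?_, ?_⟩ <;>
      exact adj_symm (adj_flip j k)

/-- Common even neighbours of `i#k` and `i#l`, for `i` even and `k ≠ l`. -/
lemma common_pair_even {i : Fin n → Bool} (hi : hcEven i) {k l : Fin n} (hkl : k ≠ l) :
    Finset.univ.filter
        (fun x => hcEven x ∧ hcAdj x (hcFlip i k) ∧ hcAdj x (hcFlip i l))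
      = {i, hcFlip (hcFlip i k) l} := by
  ext x
  simp only [Finset.mem_filter, Finset.mem_univ, true_and, Finset.mem_insert,
    Finset.mem_singleton]
  constructor
  · rintro ⟨-, h1, h2⟩
    obtain ⟨m, rfl⟩ := adj_iff.mp (adj_symm h1)
    obtain ⟨m', hm'⟩ := adj_iff.mp (adj_symm h2)
    by_cases hmk : m = k
    · left; rw [hmk, flip_flip]
    by_cases hml : m = l
    · right; rw [hml]
    exfalso
    have hm'k : m' = k := by
      by_contra hm'k
      have hA : hcFlip (hcFlip i k) m k = !i k := by
        rw [flip_ne _ (Ne.symm hmk), flip_self]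
      have hB : hcFlip (hcFlip i l) m' k = i k := by
        rw [flip_ne _ (Ne.symm hm'k), flip_ne _ hkl]
      rw [← hm', hA] at hB
      cases hik : i k <;> simp [hik] at hB
    have hA : hcFlip (hcFlip i k) m l = i l := by
      rw [flip_ne _ (Ne.symm hml), flip_ne _ (Ne.symm hkl)]
    have hB : hcFlip (hcFlip i l) m' l = !i l := by
      rw [hm'k, flip_ne _ (Ne.symm hkl), flip_self]
    rw [← hm', hA] at hB
    cases hil : i l <;> simp [hil] at hB
  · rintro (rfl | rfl)
    · exact ⟨hi, adj_flip x k, adj_flip x l⟩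
    · refine ⟨?_, ?_, ?_⟩
      · rw [hcEven_flip, hcEven_flip]; simpa using hi
      · exact adj_iff.mpr ⟨l, (flip_flip (hcFlip i k) l).symm⟩
      · rw [flip_comm]
        exact adj_iff.mpr ⟨k, (flip_flip (hcFlip i l) k).symm⟩

/-- Common odd neighbours of `i` and `i#k#l`, for `i` even and `k ≠ l`. -/
lemma common_pair_odd {i : Fin n → Bool} (hi : hcEven i) {k l : Fin n} (hkl : k ≠ l) :
    Finset.univ.filter
        (fun j => ¬ hcEven j ∧ hcAdj i j ∧ hcAdj (hcFlip (hcFlip i k) l) j)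
      = {hcFlip i k, hcFlip i l} := by
  ext x
  simp only [Finset.mem_filter, Finset.mem_univ, true_and, Finset.mem_insert,
    Finset.mem_singleton]
  constructor
  · rintro ⟨-, h1, h2⟩
    obtain ⟨m, rfl⟩ := adj_iff.mp h1
    obtain ⟨m', hm'⟩ := adj_iff.mp h2
    by_cases hmk : m = k
    · left; rw [hmk]
    by_cases hml : m = l
    · right; rw [hml]
    exfalso
    have hm'k : m' = k := by
      by_contra hm'k
      have hA : hcFlip i m k = i k := flip_ne _ (Ne.symm hmk)
      have hB : hcFlip (hcFlip (hcFlip i k) l) m' k = !i k := by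
        rw [flip_ne _ (Ne.symm hm'k), flip_ne _ hkl, flip_self]
      rw [← hm', hA] at hB
      cases hik : i k <;> simp [hik] at hB
    have hA : hcFlip i m l = i l := flip_ne _ (Ne.symm hml)
    have hB : hcFlip (hcFlip (hcFlip i k) l) m' l = !i l := by
      rw [hm'k, flip_ne _ (Ne.symm hkl), flip_self, flip_ne _ (Ne.symm hkl)]
    rw [← hm', hA] at hB
    cases hil : i l <;> simp [hil] at hB
  · rintro (rfl | rfl)
    · refine ⟨by rw [hcEven_flip]; exact fun h => h hi, adj_flip i k, ?_⟩
      exact adj_iff.mpr ⟨l, (flip_flip (hcFlip i k) l).symm⟩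
    · refine ⟨by rw [hcEven_flip]; exact fun h => h hi, adj_flip i l, ?_⟩
      rw [flip_comm]
      exact adj_iff.mpr ⟨k, (flip_flip (hcFlip i l) k).symm⟩

variable {cc : (Fin n → Bool) → (Fin n → Bool) → ℂ}

lemma inV_flip (hnz : ∀ i j, hcEven i → hcAdj i j → cc i j ≠ 0)
    {i : Fin n → Bool} (hi : hcEven i) (k : Fin n) : inV cc (hcFlip i k) :=
  ⟨by rw [hcEven_flip]; exact fun h => h hi, i, adj_flip i k, hnz i _ hi (adj_flip i k)⟩

lemma inU_of (hnz : ∀ i j, hcEven i → hcAdj i j → cc i j ≠ 0)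
    {i : Fin n → Bool} (hi : hcEven i) (k : Fin n) : inU cc i :=
  ⟨hi, hcFlip i k, adj_flip i k, hnz i _ hi (adj_flip i k)⟩

/-- Relation (C). -/
lemma relC (hadm : Admissible cc) (hnz : ∀ i j, hcEven i → hcAdj i j → cc i j ≠ 0)
    {i : Fin n → Bool} (hi : hcEven i) {k l : Fin n} (hkl : k ≠ l) :
    cc i (hcFlip i k) * (starRingEnd ℂ) (cc i (hcFlip i l))
      + cc (hcFlip (hcFlip i k) l) (hcFlip i k)
        * (starRingEnd ℂ) (cc (hcFlip (hcFlip i k) l) (hcFlip i l)) = 0 := by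
  have h := hadm.1 (hcFlip i k) (inV_flip hnz hi k) (hcFlip i l) (inV_flip hnz hi l)
  rw [common_pair_even hi hkl] at h
  rw [Finset.sum_pair (flip_flip_ne_self hkl).symm] at h
  rw [if_neg (flip_ne_flip hkl)] at h
  exact h

/-- Relation (D). -/
lemma relD (hadm : Admissible cc) (hnz : ∀ i j, hcEven i → hcAdj i j → cc i j ≠ 0)
    {i : Fin n → Bool} (hi : hcEven i) {k l : Fin n} (hkl : k ≠ l) :
    cc i (hcFlip i k) * (starRingEnd ℂ) (cc (hcFlip (hcFlip i k) l) (hcFlip i k))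
      + cc i (hcFlip i l)
        * (starRingEnd ℂ) (cc (hcFlip (hcFlip i k) l) (hcFlip i l)) = 0 := by
  have hi' : hcEven (hcFlip (hcFlip i k) l) := by
    rw [hcEven_flip, hcEven_flip]; simpa using hi
  have h := hadm.2 i (inU_of hnz hi k) (hcFlip (hcFlip i k) l) (inU_of hnz hi' k)
  rw [common_pair_odd hi hkl] at h
  rw [Finset.sum_pair (flip_ne_flip hkl)] at h
  rw [if_neg (Ne.symm (flip_flip_ne_self hkl))] at h
  exact h

/-- Diagonal relation: the squared moduli around an even vertex sum to 1. -/
lemma relDiag (hadm : Admissible cc) (hnz : ∀ i j, hcEven i → hcAdj i j → cc i j ≠ 0)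
    {i : Fin n → Bool} (hi : hcEven i) (k₀ : Fin n) :
    ∑ k, cc i (hcFlip i k) * (starRingEnd ℂ) (cc i (hcFlip i k)) = 1 := by
  have h := hadm.2 i (inU_of hnz hi k₀) i (inU_of hnz hi k₀)
  rw [common_diag_U hi] at h
  rw [if_pos rfl] at h
  rw [Finset.sum_image (fun a _ b _ h => flip_left_inj i h)] at h
  exact h

/-- Moduli are preserved by double flips. -/
lemma mod_eq (hadm : Admissible cc) (hnz : ∀ i j, hcEven i → hcAdj i j → cc i j ≠ 0)
    {i : Fin n → Bool} (hi : hcEven i) {k l : Fin n} (hkl : k ≠ l) :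
    ‖cc i (hcFlip i k)‖
      = ‖cc (hcFlip (hcFlip i k) l)
          (hcFlip (hcFlip (hcFlip i k) l) k)‖ := by
  set i' := hcFlip (hcFlip i k) l with hi'def
  have hi' : hcEven i' := by rw [hi'def, hcEven_flip, hcEven_flip]; simpa using hi
  have e1 : hcFlip i' l = hcFlip i k := by rw [hi'def, flip_flip]
  have e2 : hcFlip i' k = hcFlip i l := by
    rw [hi'def, flip_comm (hcFlip i k) l k, flip_flip]
  have hC := relC hadm hnz hi hkl
  have hD := relD hadm hnz hi hkl
  rw [← hi'def] at hC hD
  set A := cc i (hcFlip i k) with hA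
  set B := cc i (hcFlip i l) with hB
  rw [← e1, ← e2] at hC hD
  set A' := cc i' (hcFlip i' k)
  set B' := cc i' (hcFlip i' l)
  have ha : 0 < ‖A‖ := norm_pos_iff.mpr (hnz i _ hi (adj_flip i k))
  have hb : 0 < ‖B‖ := norm_pos_iff.mpr (hnz i _ hi (adj_flip i l))
  have ha' : 0 < ‖A'‖ := norm_pos_iff.mpr (hnz i' _ hi' (adj_flip i' k))
  have hb' : 0 < ‖B'‖ := norm_pos_iff.mpr (hnz i' _ hi' (adj_flip i' l))
  have h1 : ‖A‖ * ‖B‖ = ‖B'‖ * ‖A'‖ := by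
    have : A * (starRingEnd ℂ) B = -(B' * (starRingEnd ℂ) A') := by
      linear_combination hC
    calc ‖A‖ * ‖B‖
        = ‖A * (starRingEnd ℂ) B‖ := by
          rw [norm_mul, Complex.norm_conj]
      _ = ‖B' * (starRingEnd ℂ) A'‖ := by rw [this, norm_neg]
      _ = ‖B'‖ * ‖A'‖ := by rw [norm_mul, Complex.norm_conj]
  have h2 : ‖A‖ * ‖B'‖ = ‖B‖ * ‖A'‖ := by
    have : A * (starRingEnd ℂ) B' = -(B * (starRingEnd ℂ) A') := by
      linear_combination hD
    calc ‖A‖ * ‖B'‖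
        = ‖A * (starRingEnd ℂ) B'‖ := by
          rw [norm_mul, Complex.norm_conj]
      _ = ‖B * (starRingEnd ℂ) A'‖ := by rw [this, norm_neg]
      _ = ‖B‖ * ‖A'‖ := by rw [norm_mul, Complex.norm_conj]
  have key : ‖A‖ * ‖A‖ * (‖B‖ * ‖B'‖)
      = ‖A'‖ * ‖A'‖ * (‖B‖ * ‖B'‖) := by
    linear_combination (‖A‖ * ‖B'‖) * h1
      + (‖B'‖ * ‖A'‖) * h2
  have key2 : ‖A‖ * ‖A‖ = ‖A'‖ * ‖A'‖ :=
    mul_right_cancel₀ (ne_of_gt (mul_pos hb hb')) key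
  exact (mul_self_inj ha.le ha'.le).mp key2

lemma mod_pairflip (hadm : Admissible cc) (hnz : ∀ i j, hcEven i → hcAdj i j → cc i j ≠ 0)
    {i : Fin n → Bool} (hi : hcEven i) (k : Fin n) {l m : Fin n} (hlm : l ≠ m) :
    ‖cc i (hcFlip i k)‖
      = ‖cc (hcFlip (hcFlip i l) m)
          (hcFlip (hcFlip (hcFlip i l) m) k)‖ := by
  by_cases hkl : k = l
  · subst hkl
    exact mod_eq hadm hnz hi hlm
  by_cases hkm : k = m
  · subst hkm
    have e : hcFlip (hcFlip i l) k = hcFlip (hcFlip i k) l := flip_comm i l k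
    rw [e]
    exact mod_eq hadm hnz hi hkl
  · have step1 := mod_eq hadm hnz hi (hkl : k ≠ l)
    have hi1 : hcEven (hcFlip (hcFlip i k) l) := by
      rw [hcEven_flip, hcEven_flip]; simpa using hi
    have step2 := mod_eq hadm hnz hi1 (hkm : k ≠ m)
    have e : hcFlip (hcFlip (hcFlip (hcFlip i k) l) k) m = hcFlip (hcFlip i l) m := by
      rw [flip_comm (hcFlip i k) l k, flip_flip]
    rw [e] at step2
    rw [step1, step2]

lemma mod_const (hadm : Admissible cc) (hnz : ∀ i j, hcEven i → hcAdj i j → cc i j ≠ 0) :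
    ∀ (w : ℕ) (i : Fin n → Bool), hcWeight i = w → hcEven i → ∀ k,
      ‖cc i (hcFlip i k)‖
        = ‖cc (fun _ => false) (hcFlip (fun _ => false) k)‖ := by
  intro w
  induction w using Nat.strong_induction_on with
  | _ w IH =>
    intro i hw hi k
    rcases Nat.eq_zero_or_pos w with h0 | hpos
    · subst h0
      rw [weight_zero_iff.mp hw]
    · have h2 : 1 < (Finset.univ.filter (fun l => i l = true)).card := by
        have he : hcWeight i % 2 = 0 := hcEven_iff.mp hi
        rw [hcWeight] at *
        omega
      obtain ⟨l, hl, m, hm, hlm⟩ := Finset.one_lt_card.mp h2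
      simp only [Finset.mem_filter, Finset.mem_univ, true_and] at hl hm
      have step := mod_pairflip hadm hnz hi k hlm
      have hw1 : hcWeight (hcFlip i l) + 1 = hcWeight i := weight_flip_true hl
      have hm' : hcFlip i l m = true := by rw [flip_ne _ (Ne.symm hlm)]; exact hm
      have hw2 : hcWeight (hcFlip (hcFlip i l) m) + 1 = hcWeight (hcFlip i l) :=
        weight_flip_true hm'
      have hi2 : hcEven (hcFlip (hcFlip i l) m) := by
        rw [hcEven_flip, hcEven_flip]; simpa using hi
      rw [step]
      exact IH (hcWeight (hcFlip (hcFlip i l) m)) (by omega) _ rfl hi2 k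

noncomputable def gauge (E : (Fin n → Bool) → Fin n → ℂ) (x : Fin n → Bool) : ℂ :=
  if h : (Finset.univ.filter (fun k => x k = true)).Nonempty then
    E (hcFlip x ((Finset.univ.filter (fun k => x k = true)).max' h))
        ((Finset.univ.filter (fun k => x k = true)).max' h)
      * (starRingEnd ℂ)
          (gauge E (hcFlip x ((Finset.univ.filter (fun k => x k = true)).max' h)))
  else 1
termination_by hcWeight x
decreasing_by
  have hmem := Finset.max'_mem _ h
  have hx : x ((Finset.univ.filter (fun k => x k = true)).max' h) = true :=
    (Finset.mem_filter.mp hmem).2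
  have := weight_flip_true hx
  omega

lemma gauge_pos (E : (Fin n → Bool) → Fin n → ℂ) (x : Fin n → Bool)
    (h : (Finset.univ.filter (fun k => x k = true)).Nonempty) :
    gauge E x
      = E (hcFlip x ((Finset.univ.filter (fun k => x k = true)).max' h))
          ((Finset.univ.filter (fun k => x k = true)).max' h)
        * (starRingEnd ℂ)
            (gauge E (hcFlip x ((Finset.univ.filter (fun k => x k = true)).max' h))) := by
  rw [gauge, dif_pos h]

lemma gauge_abs (E : (Fin n → Bool) → Fin n → ℂ)
    (Hmod : ∀ y k, ‖E y k‖ = 1) :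
    ∀ (w : ℕ) (x : Fin n → Bool), hcWeight x = w → ‖gauge E x‖ = 1 := by
  intro w
  induction w using Nat.strong_induction_on with
  | _ w IH =>
    intro x hw
    by_cases h : (Finset.univ.filter (fun k => x k = true)).Nonempty
    · rw [gauge_pos E x h]
      have hx : x ((Finset.univ.filter (fun k => x k = true)).max' h) = true :=
        (Finset.mem_filter.mp (Finset.max'_mem _ h)).2
      rw [norm_mul, Complex.norm_conj, Hmod]
      rw [IH (hcWeight (hcFlip x _)) (by have := weight_flip_true hx; omega) _ rfl]
      norm_num
    · rw [gauge, dif_neg h]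
      norm_num

lemma gauge_mul_true (E : (Fin n → Bool) → Fin n → ℂ)
    (Hmod : ∀ y k, ‖E y k‖ = 1)
    (Hsymm : ∀ y k, E (hcFlip y k) k = E y k)
    (Hsq : ∀ y (k m : Fin n), k ≠ m →
      E y k * E (hcFlip y m) k = E y m * E (hcFlip y k) m) :
    ∀ (w : ℕ) (x : Fin n → Bool), hcWeight x = w → ∀ k, x k = true →
      gauge E x * gauge E (hcFlip x k) = E x k := by
  intro w
  induction w using Nat.strong_induction_on with
  | _ w IH =>
    intro x hw k hk
    have hne : (Finset.univ.filter (fun l => x l = true)).Nonempty :=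
      ⟨k, by simp [hk]⟩
    have hxm : x ((Finset.univ.filter (fun l => x l = true)).max' hne) = true :=
      (Finset.mem_filter.mp (Finset.max'_mem _ hne)).2
    set m := (Finset.univ.filter (fun l => x l = true)).max' hne with hmdef
    rw [gauge_pos E x hne]
    rw [← hmdef]
    by_cases hkm : k = m
    · rw [hkm]
      have hg : ‖gauge E (hcFlip x m)‖ = 1 :=
        gauge_abs E Hmod (hcWeight (hcFlip x m)) _ rfl
      have hcc : (starRingEnd ℂ) (gauge E (hcFlip x m)) * gauge E (hcFlip x m) = 1 := by
        rw [mul_comm, Complex.mul_conj, Complex.normSq_eq_norm_sq, hg]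
        norm_num
      rw [mul_assoc, hcc, mul_one]
      exact Hsymm x m
    · -- expand gauge at x#k
      have hne2 : (Finset.univ.filter (fun l => hcFlip x k l = true)).Nonempty := by
        refine ⟨m, ?_⟩
        simp only [Finset.mem_filter, Finset.mem_univ, true_and]
        rw [flip_ne _ (Ne.symm hkm)]
        exact hxm
      have hmax2 : (Finset.univ.filter (fun l => hcFlip x k l = true)).max' hne2 = m := by
        apply le_antisymm
        · apply Finset.max'_le
          intro b hb
          simp only [Finset.mem_filter, Finset.mem_univ, true_and] at hb
          have hbk : b ≠ k := by
            rintro rfl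
            rw [flip_self, hk] at hb
            simp at hb
          rw [flip_ne _ hbk] at hb
          exact Finset.le_max' _ b (by simp [hb])
        · apply Finset.le_max'
          simp only [Finset.mem_filter, Finset.mem_univ, true_and]
          rw [flip_ne _ (Ne.symm hkm)]
          exact hxm
      rw [gauge_pos E (hcFlip x k) hne2, hmax2]
      have hIH := IH (hcWeight (hcFlip x m))
        (by have := weight_flip_true hxm; omega) (hcFlip x m) rfl k
        (by rw [flip_ne _ hkm]; exact hk)
      rw [flip_comm x m k] at hIH
      have hconj : (starRingEnd ℂ) (gauge E (hcFlip x m))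
          * (starRingEnd ℂ) (gauge E (hcFlip (hcFlip x k) m))
          = (starRingEnd ℂ) (E (hcFlip x m) k) := by
        rw [← map_mul, hIH]
      have hz1 : E (hcFlip x m) k * (starRingEnd ℂ) (E (hcFlip x m) k) = 1 := by
        rw [Complex.mul_conj, Complex.normSq_eq_norm_sq, Hmod]
        norm_num
      calc E (hcFlip x m) m * (starRingEnd ℂ) (gauge E (hcFlip x m))
            * (E (hcFlip (hcFlip x k) m) m
              * (starRingEnd ℂ) (gauge E (hcFlip (hcFlip x k) m)))
          = E (hcFlip x m) m * E (hcFlip (hcFlip x k) m) m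
              * ((starRingEnd ℂ) (gauge E (hcFlip x m))
                * (starRingEnd ℂ) (gauge E (hcFlip (hcFlip x k) m))) := by ring
        _ = E x m * E (hcFlip x k) m * (starRingEnd ℂ) (E (hcFlip x m) k) := by
              rw [hconj, Hsymm x m, Hsymm (hcFlip x k) m]
        _ = E x k * (E (hcFlip x m) k * (starRingEnd ℂ) (E (hcFlip x m) k)) := by
              rw [← Hsq x k m hkm]; ring
        _ = E x k := by rw [hz1, mul_one]

lemma gauge_mul (E : (Fin n → Bool) → Fin n → ℂ)
    (Hmod : ∀ y k, ‖E y k‖ = 1)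
    (Hsymm : ∀ y k, E (hcFlip y k) k = E y k)
    (Hsq : ∀ y (k m : Fin n), k ≠ m →
      E y k * E (hcFlip y m) k = E y m * E (hcFlip y k) m)
    (x : Fin n → Bool) (k : Fin n) :
    gauge E x * gauge E (hcFlip x k) = E x k := by
  cases hk : x k
  · have h2 : hcFlip x k k = true := by simp [flip_self, hk]
    have := gauge_mul_true E Hmod Hsymm Hsq (hcWeight (hcFlip x k)) (hcFlip x k) rfl k h2
    rw [flip_flip, Hsymm] at this
    rw [mul_comm]
    exact this
  · exact gauge_mul_true E Hmod Hsymm Hsq (hcWeight x) x rfl k hk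

end HCAux2
end HCAux

open HCAux HCAux.HCAux2 in
/-- Let `c` be a nowhere-vanishing admissible edge weighting of
`Q_n`.  Then there are a point `t` of the standard simplex `Δ_{n-1}` and modulus-one
complex numbers `λ_x`, indexed by the vertices of `Q_n`, such that
`c({i, i#k}) = λ_i λ_{i#k} (−1)^{par_k(i)} √(t_k)` for every even vertex `i` and every
`k < n`; that is, `c(ij) = λ_i λ_j c_t(ij)` on every edge of `Q_n`. -/
theorem nonvanishing_admissible_gauge_equivalent {n : ℕ} (hn : 1 ≤ n)
    (c : (Fin n → Bool) → (Fin n → Bool) → ℂ) (hadm : Admissible c)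
    (hnz : ∀ i j, hcEven i → hcAdj i j → c i j ≠ 0) :
    ∃ (t : Fin n → ℝ) (lam : (Fin n → Bool) → ℂ),
      (∀ k, 0 ≤ t k) ∧ (∑ k, t k = 1) ∧
      (∀ x, ‖lam x‖ = 1) ∧
      ∀ (i : Fin n → Bool) (k : Fin n), hcEven i →
        c i (hcFlip i k)
          = lam i * lam (hcFlip i k) * ((-1 : ℂ) ^ hcPar k i * (Real.sqrt (t k) : ℂ)) := by
  classical
  set i0 : Fin n → Bool := fun _ => false with hi0def
  have hi0 : hcEven i0 := hcEven_false
  set t : Fin n → ℝ := fun k => (‖c i0 (hcFlip i0 k)‖)^2 with htdef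
  have htpos : ∀ k, 0 < t k := fun k =>
    pow_pos (norm_pos_iff.mpr (hnz i0 _ hi0 (adj_flip i0 k))) 2
  -- squared modulus of every edge weight
  have hmodsq : ∀ i, hcEven i → ∀ k,
      c i (hcFlip i k) * (starRingEnd ℂ) (c i (hcFlip i k)) = ((t k : ℝ) : ℂ) := by
    intro i hi k
    have habs : Complex.normSq (c i (hcFlip i k)) = t k := by
      rw [← Complex.sq_norm, mod_const hadm hnz (hcWeight i) i rfl hi k]
    rw [Complex.mul_conj, habs]
  -- sum of the t's
  have htsum : ∑ k, t k = 1 := by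
    have h := relDiag hadm hnz hi0 ⟨0, hn⟩
    rw [Finset.sum_congr rfl (fun k _ => hmodsq i0 hi0 k)] at h
    rw [← Complex.ofReal_sum] at h
    exact_mod_cast h
  have hsqrt : ∀ k, Real.sqrt (t k) * Real.sqrt (t k) = t k :=
    fun k => Real.mul_self_sqrt (htpos k).le
  have hsqpos : ∀ k, 0 < Real.sqrt (t k) := fun k => Real.sqrt_pos.mpr (htpos k)
  have hsqne : ∀ k, ((Real.sqrt (t k) : ℝ) : ℂ) ≠ 0 := fun k => by
    exact_mod_cast (hsqpos k).ne'
  -- the normalized edge weights on even vertices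
  set u : (Fin n → Bool) → Fin n → ℂ :=
    fun i k => c i (hcFlip i k) * (-1 : ℂ)^(hcPar k i)
      * ((Real.sqrt (t k) : ℝ) : ℂ)⁻¹ with hudef
  have humod : ∀ i, hcEven i → ∀ k, ‖u i k‖ = 1 := by
    intro i hi k
    have h1 : ‖c i (hcFlip i k)‖ = Real.sqrt (t k) := by
      rw [mod_const hadm hnz (hcWeight i) i rfl hi k]
      rw [htdef]
      exact (Real.sqrt_sq (norm_nonneg _)).symm
    have h2 : ‖(-1 : ℂ)^(hcPar k i)‖ = 1 := by
      rw [norm_pow]; simp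
    rw [hudef]
    simp only
    rw [norm_mul, norm_mul, h1, h2, norm_inv, Complex.norm_real, Real.norm_eq_abs,
      abs_of_pos (hsqpos k)]
    rw [mul_one]
    exact mul_inv_cancel₀ (hsqpos k).ne'
  -- relation (14): the phase square relation before sign correction
  have h14 : ∀ (i : Fin n → Bool), hcEven i → ∀ (k l : Fin n), k ≠ l →
      c i (hcFlip i k)
          * c (hcFlip (hcFlip i k) l) (hcFlip (hcFlip (hcFlip i k) l) k)
          * ((t l : ℝ) : ℂ)
        + c i (hcFlip i l)
          * c (hcFlip (hcFlip i k) l) (hcFlip (hcFlip (hcFlip i k) l) l)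
          * ((t k : ℝ) : ℂ) = 0 := by
    intro i hi k l hkl
    set i' := hcFlip (hcFlip i k) l with hi'def
    have hi' : hcEven i' := by rw [hi'def, hcEven_flip, hcEven_flip]; simpa using hi
    have e1 : hcFlip i' l = hcFlip i k := by rw [hi'def, HCAux.flip_flip]
    have e2 : hcFlip i' k = hcFlip i l := by
      rw [hi'def, flip_comm (hcFlip i k) l k, HCAux.flip_flip]
    have hD := relD hadm hnz hi hkl
    rw [← hi'def] at hD
    set A := c i (hcFlip i k) with hA
    set B := c i (hcFlip i l) with hB
    rw [← e1, ← e2] at hD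
    set A' := c i' (hcFlip i' k) with hA'
    set B' := c i' (hcFlip i' l) with hB'
    have hAA' : A' * (starRingEnd ℂ) A' = ((t k : ℝ) : ℂ) := hmodsq i' hi' k
    have hBB' : B' * (starRingEnd ℂ) B' = ((t l : ℝ) : ℂ) := hmodsq i' hi' l
    linear_combination A' * B' * hD - A * A' * hBB' - B * B' * hAA'
  -- the square relation for `u`
  have husq : ∀ (i : Fin n → Bool), hcEven i → ∀ (k m : Fin n), k ≠ m →
      u i k * u (hcFlip (hcFlip i k) m) k = u i m * u (hcFlip (hcFlip i k) m) m := by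
    intro i hi k m hkm
    have h := h14 i hi k m hkm
    have hsign := sign_square i hkm
    have hsk : ((Real.sqrt (t k) : ℝ) : ℂ) * ((Real.sqrt (t k) : ℝ) : ℂ)
        = ((t k : ℝ) : ℂ) := by
      rw [← Complex.ofReal_mul, hsqrt k]
    have hsm : ((Real.sqrt (t m) : ℝ) : ℂ) * ((Real.sqrt (t m) : ℝ) : ℂ)
        = ((t m : ℝ) : ℂ) := by
      rw [← Complex.ofReal_mul, hsqrt m]
    rw [hudef]
    simp only
    field_simp
    rw [sq, sq, hsk, hsm, div_eq_div_iff (by exact_mod_cast (htpos k).ne') (by exact_mod_cast (htpos m).ne')]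
    linear_combination ((-1:ℂ)^(hcPar k i) * (-1:ℂ)^(hcPar k (hcFlip (hcFlip i k) m))) * h
      - (c i (hcFlip i m) * c (hcFlip (hcFlip i k) m) (hcFlip (hcFlip (hcFlip i k) m) m)
          * ((t k : ℝ) : ℂ)) * hsign
  -- the symmetric edge weighting
  set E : (Fin n → Bool) → Fin n → ℂ :=
    fun y k => if hcEven y then u y k else u (hcFlip y k) k with hEdef
  have hEeven : ∀ y k, hcEven y → E y k = u y k := by
    intro y k hy; rw [hEdef]; simp only [if_pos hy]
  have hEodd : ∀ y k, ¬ hcEven y → E y k = u (hcFlip y k) k := by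
    intro y k hy; rw [hEdef]; simp only [if_neg hy]
  have Hmod : ∀ y k, ‖E y k‖ = 1 := by
    intro y k
    by_cases hy : hcEven y
    · rw [hEeven y k hy]; exact humod y hy k
    · rw [hEodd y k hy]
      exact humod _ (by rwa [hcEven_flip]) k
  have Hsymm : ∀ y k, E (hcFlip y k) k = E y k := by
    intro y k
    by_cases hy : hcEven y
    · rw [hEeven y k hy, hEodd (hcFlip y k) k (by rw [hcEven_flip]; exact fun h => h hy),
        HCAux.flip_flip]
    · rw [hEodd y k hy, hEeven (hcFlip y k) k (by rwa [hcEven_flip])]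
  have Hsq : ∀ y (k m : Fin n), k ≠ m →
      E y k * E (hcFlip y m) k = E y m * E (hcFlip y k) m := by
    intro y k m hkm
    by_cases hy : hcEven y
    · have hodd1 : ¬ hcEven (hcFlip y m) := by rw [hcEven_flip]; exact fun h => h hy
      have hodd2 : ¬ hcEven (hcFlip y k) := by rw [hcEven_flip]; exact fun h => h hy
      rw [hEeven y k hy, hEeven y m hy, hEodd _ _ hodd1, hEodd _ _ hodd2]
      rw [flip_comm y m k]
      exact husq y hy k m hkm
    · have hev1 : hcEven (hcFlip y k) := by rwa [hcEven_flip]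
      have hev2 : hcEven (hcFlip y m) := by rwa [hcEven_flip]
      rw [hEodd y k hy, hEodd y m hy, hEeven _ _ hev1, hEeven _ _ hev2]
      have h := husq (hcFlip y k) hev1 k m hkm
      rw [HCAux.flip_flip] at h
      rw [h]
      ring
  refine ⟨t, gauge E, fun k => (htpos k).le, htsum,
    fun x => gauge_abs E Hmod (hcWeight x) x rfl, ?_⟩
  intro i k hi
  have hmul := gauge_mul E Hmod Hsymm Hsq i k
  rw [hmul, hEeven i k hi, hudef]
  simp only
  have h1 : ((-1:ℂ))^(hcPar k i) * ((-1:ℂ))^(hcPar k i) = 1 := by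
    rw [← pow_add]
    exact Even.neg_one_pow ⟨hcPar k i, rfl⟩
  have h2 : ((Real.sqrt (t k) : ℝ) : ℂ)⁻¹ * ((Real.sqrt (t k) : ℝ) : ℂ) = 1 :=
    inv_mul_cancel₀ (hsqne k)
  calc c i (hcFlip i k)
      = c i (hcFlip i k) * ((-1:ℂ)^(hcPar k i) * (-1:ℂ)^(hcPar k i))
          * (((Real.sqrt (t k) : ℝ) : ℂ)⁻¹ * ((Real.sqrt (t k) : ℝ) : ℂ)) := by
        rw [h1, h2]; ring
    _ = c i (hcFlip i k) * (-1:ℂ)^(hcPar k i) * ((Real.sqrt (t k) : ℝ) : ℂ)⁻¹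
          * ((-1 : ℂ)^(hcPar k i) * ((Real.sqrt (t k) : ℝ) : ℂ)) := by ring
end
end
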